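/- Let φ be a singular-expansive flow on a compact metric space X. If Sing(φ) is dynamically isolated, then for every t>0 the set of periodic orbits of φ whose period lies in [0,t] is finite; that is, the collection of sets {φ_ℝ(x) : x is a periodic point of φ with least period ≤ t} is finite. -/

import Mathlib

/-!
Choose on each of infinitely many periodic orbits of period at most `t` a base point outside
the isolating neighbourhood of `Sing(φ)`, and pass to a subsequence along which the base points
and periods converge. The limit point is nonsingular, so near its orbit arc the distance to
`Sing(φ)` is bounded below. Two periodic points far along the subsequence, with periods `a` and
`b`, then shadow each other under the linear time change `u ↦ (b / a) u` within
`δ · dist(·, Sing(φ))`: by periodicity it suffices to compare the orbits over one period, where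
uniform continuity of the flow applies. Singular expansivity puts them on the same orbit.
-/

open Set Metric Filter
open scoped Classical

variable {X : Type*}

/-- A (continuous) flow on a topological space, given as a map `φ : ℝ → X → X`. -/
def IsFlowMap [TopologicalSpace X] (φ : ℝ → X → X) : Prop :=
  Continuous (fun p : ℝ × X => φ p.1 p.2) ∧ (∀ x : X, φ 0 x = x) ∧
    ∀ t s : ℝ, ∀ x : X, φ (t + s) x = φ t (φ s x)

/-- The singular set of a flow. -/
def SingSet (φ : ℝ → X → X) : Set X := {x : X | ∀ t : ℝ, φ t x = x}

/-- An increasing homeomorphism of `ℝ`: a strictly increasing continuous bijection. -/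
def IncreasingHomeo (s : ℝ → ℝ) : Prop :=
  Continuous s ∧ StrictMono s ∧ Function.Bijective s

/-- Distance from a point to a set, with the convention that the distance
to the empty set is the diameter of the whole space. -/
noncomputable def distToSet [MetricSpace X] (z : X) (A : Set X) : ℝ :=
  if A = ∅ then Metric.diam (Set.univ : Set X) else Metric.infDist z A

/-- The orbit of a point under a flow. -/
def flowOrbit (φ : ℝ → X → X) (x : X) : Set X := Set.range fun t : ℝ => φ t x

/-- Bowen–Walters expansivity of a flow on a subset `Λ`. -/
def ExpansiveOn [MetricSpace X] (φ : ℝ → X → X) (Λ : Set X) : Prop :=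
  ∀ ε > (0:ℝ), ∃ δ > (0:ℝ), ∀ x ∈ Λ, ∀ y ∈ Λ, ∀ s : ℝ → ℝ, Continuous s → s 0 = 0 →
    (∀ t : ℝ, dist (φ t x) (φ (s t) y) ≤ δ) →
    ∃ τ ∈ Set.Icc (-ε) ε, y = φ τ x

/-- Komuro k*-expansivity of a flow on a subset `Λ`. -/
def KStarExpansiveOn [MetricSpace X] (φ : ℝ → X → X) (Λ : Set X) : Prop :=
  ∀ ε > (0:ℝ), ∃ δ > (0:ℝ), ∀ x ∈ Λ, ∀ y ∈ Λ, ∀ s : ℝ → ℝ,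
    IncreasingHomeo s → s 0 = 0 →
    (∀ t : ℝ, dist (φ t x) (φ (s t) y) ≤ δ) →
    ∃ t₀ : ℝ, ∃ τ ∈ Set.Icc (t₀ - ε) (t₀ + ε), φ (s t₀) y = φ τ x

/-- Singular expansivity of a flow on a subset `Λ`. -/
def SingularExpansiveOn [MetricSpace X] (φ : ℝ → X → X) (Λ : Set X) : Prop :=
  ∀ ε > (0:ℝ), ∃ δ > (0:ℝ), ∀ x ∈ Λ, ∀ y ∈ Λ, ∀ s : ℝ → ℝ, IncreasingHomeo s →
    (∀ t : ℝ, dist (φ t x) (φ (s t) y) ≤ δ * distToSet (φ t x) (SingSet φ)) →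
    ∃ t₀ : ℝ, ∃ τ ∈ Set.Icc (t₀ - ε) (t₀ + ε), φ (s t₀) y = φ τ x

/-- A periodic point of a flow: a nonsingular point with a positive period. -/
def IsPeriodicPoint (φ : ℝ → X → X) (x : X) : Prop :=
  x ∉ SingSet φ ∧ ∃ t : ℝ, 0 < t ∧ φ t x = x

/-- An invariant set `K` is dynamically isolated if it has a neighborhood `U`
with `K = ⋂_{t ∈ ℝ} φ_t(U)`. -/
def DynIsolated [TopologicalSpace X] (φ : ℝ → X → X) (K : Set X) : Prop :=
  ∃ U : Set X, K ⊆ interior U ∧ K = ⋂ t : ℝ, φ t '' U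

/-- Equicontinuity of a flow. -/
def EquicontinuousFlow [MetricSpace X] (φ : ℝ → X → X) : Prop :=
  ∀ ε > (0:ℝ), ∃ δ > (0:ℝ), ∀ x y : X, dist x y ≤ δ →
    ∀ t : ℝ, dist (φ t x) (φ t y) ≤ ε

/-- Singular equicontinuity of a flow. -/
def SingularEquicontinuous [MetricSpace X] (φ : ℝ → X → X) : Prop :=
  ∀ ε > (0:ℝ), ∃ δ > (0:ℝ), ∀ x y : X, dist x y ≤ δ * distToSet x (SingSet φ) →
    ∀ t : ℝ, dist (φ t x) (φ t y) ≤ ε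

lemma nontrivial_of_notMem_singSet {φ : ℝ → X → X} {x : X} (hx : x ∉ SingSet φ) :
    Nontrivial X := by
  obtain ⟨t, ht⟩ : ∃ t, φ t x ≠ x := by simpa [SingSet] using hx
  exact ⟨⟨_, _, ht⟩⟩

lemma increasingHomeo_const_mul {c : ℝ} (hc : 0 < c) : IncreasingHomeo (c * ·) :=
  ⟨continuous_const.mul continuous_id, strictMono_mul_left_of_pos hc,
    mulLeft_bijective₀ c hc.ne'⟩

namespace IsFlowMap

variable [TopologicalSpace X] {φ : ℝ → X → X}

lemma continuous_orbitMap (hφ : IsFlowMap φ) (x : X) : Continuous fun t : ℝ => φ t x :=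
  hφ.1.comp (continuous_id.prodMk continuous_const)

lemma continuous_apply (hφ : IsFlowMap φ) (t : ℝ) : Continuous (φ t) :=
  hφ.1.comp (continuous_const.prodMk continuous_id)

lemma apply_zero (hφ : IsFlowMap φ) (x : X) : φ 0 x = x := hφ.2.1 x

lemma apply_add (hφ : IsFlowMap φ) (t s : ℝ) (x : X) : φ (t + s) x = φ t (φ s x) :=
  hφ.2.2 t s x

lemma apply_neg_apply (hφ : IsFlowMap φ) (t : ℝ) (x : X) : φ (-t) (φ t x) = x := by
  rw [← hφ.apply_add, neg_add_cancel, hφ.apply_zero]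

lemma apply_intCast_mul (hφ : IsFlowMap φ) {a : ℝ} {x : X} (hx : φ a x = x) (k : ℤ) :
    φ (k * a) x = x := by
  induction k using Int.induction_on with
  | zero => simpa using hφ.apply_zero x
  | succ n ih =>
    push_cast at ih ⊢
    rw [add_one_mul, hφ.apply_add, hx, ih]
  | pred n ih =>
    have hx' : φ (-a) x = x := by simpa [hx] using hφ.apply_neg_apply a x
    push_cast at ih ⊢
    rw [sub_one_mul, sub_eq_add_neg, hφ.apply_add, hx', ih]

lemma apply_mul_fract (hφ : IsFlowMap φ) {a : ℝ} {x : X} (hx : φ a x = x) (v : ℝ) :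
    φ (a * v) x = φ (a * Int.fract v) x := by
  conv_lhs => rw [← Int.floor_add_fract v, mul_add, add_comm, hφ.apply_add, mul_comm a (⌊v⌋ : ℝ),
    hφ.apply_intCast_mul hx]

lemma flowOrbit_apply (hφ : IsFlowMap φ) (c : ℝ) (x : X) :
    flowOrbit φ (φ c x) = flowOrbit φ x := by
  ext z
  constructor
  · rintro ⟨u, rfl⟩
    exact ⟨u + c, hφ.apply_add u c x⟩
  · rintro ⟨u, rfl⟩
    exact ⟨u - c, show φ (u - c) (φ c x) = φ u x by rw [← hφ.apply_add, sub_add_cancel]⟩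

lemma flowOrbit_eq_of_apply_eq (hφ : IsFlowMap φ) {x y : X} {r τ : ℝ} (h : φ r y = φ τ x) :
    flowOrbit φ y = flowOrbit φ x := by
  rw [← hφ.flowOrbit_apply r y, h, hφ.flowOrbit_apply]

lemma mem_singSet_of_apply_mem (hφ : IsFlowMap φ) {x : X} {t : ℝ} (h : φ t x ∈ SingSet φ) :
    x ∈ SingSet φ := fun s => by
  rw [← hφ.apply_neg_apply t x, ← hφ.apply_add, add_comm, hφ.apply_add, h s]

lemma isClosed_singSet [T2Space X] (hφ : IsFlowMap φ) : IsClosed (SingSet φ) := by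
  rw [SingSet, ofPred_forall]
  exact isClosed_iInter fun t => isClosed_eq (hφ.continuous_apply t) continuous_id

lemma exists_apply_notMem (hφ : IsFlowMap φ) {U : Set X} {x : X}
    (hx : x ∉ ⋂ t : ℝ, φ t '' U) : ∃ c, φ c x ∉ U := by
  by_contra! hall
  exact hx (mem_iInter.2 fun s => ⟨φ (-s) x, hall _, by simpa using hφ.apply_neg_apply (-s) x⟩)

lemma exists_period_le_of_sInf_le (hφ : IsFlowMap φ) [T2Space X] {x : X} {t : ℝ} (ht : 0 < t)
    (hper : ∃ τ, 0 < τ ∧ φ τ x = x) (hxt : sInf {τ : ℝ | 0 < τ ∧ φ τ x = x} ≤ t) :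
    ∃ a, 0 < a ∧ a ≤ t ∧ φ a x = x := by
  set P := {τ : ℝ | 0 < τ ∧ φ τ x = x}
  have hbdd : BddBelow P := ⟨0, fun τ hτ => hτ.1.le⟩
  rcases hxt.lt_or_eq with hlt | heq
  · obtain ⟨τ, hτ, hτt⟩ := (csInf_lt_iff hbdd hper).1 hlt
    exact ⟨τ, hτ.1, hτt.le, hτ.2⟩
  · have hcl : closure P ⊆ {τ : ℝ | φ τ x = x} :=
      closure_minimal (fun τ hτ => hτ.2) (isClosed_eq (hφ.continuous_orbitMap x) continuous_const)
    exact ⟨t, ht, le_rfl, heq ▸ hcl (csInf_mem_closure hper hbdd)⟩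

lemma exists_periodic_rep_notMem (hφ : IsFlowMap φ) [T2Space X] {U : Set X} {x : X} {t : ℝ}
    (hx : x ∉ ⋂ s : ℝ, φ s '' U) (ht : 0 < t) (hper : ∃ τ, 0 < τ ∧ φ τ x = x)
    (hxt : sInf {τ : ℝ | 0 < τ ∧ φ τ x = x} ≤ t) :
    ∃ p a, flowOrbit φ p = flowOrbit φ x ∧ p ∉ U ∧ 0 < a ∧ a ≤ t ∧ φ a p = p := by
  obtain ⟨a, ha, hat, hax⟩ := hφ.exists_period_le_of_sInf_le ht hper hxt
  obtain ⟨c, hc⟩ := hφ.exists_apply_notMem hx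
  exact ⟨φ c x, a, hφ.flowOrbit_apply c x, hc, ha, hat,
    by rw [← hφ.apply_add, add_comm, hφ.apply_add, hax]⟩

end IsFlowMap

section Metric

variable [MetricSpace X]

lemma distToSet_le_distToSet_add_dist (z w : X) (A : Set X) :
    distToSet z A ≤ distToSet w A + dist z w := by
  unfold distToSet
  split_ifs
  · linarith [dist_nonneg (x := z) (y := w)]
  · exact infDist_le_infDist_add_dist

lemma continuous_distToSet (A : Set X) : Continuous fun z : X => distToSet z A := by
  by_cases hA : A = ∅
  · simp only [distToSet, hA, if_true]
    exact continuous_const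
  · simp only [distToSet, hA, if_false]
    exact continuous_infDist_pt A

variable [CompactSpace X] [Nontrivial X]

lemma distToSet_pos {A : Set X} (hA : IsClosed A) {z : X} (hz : z ∉ A) : 0 < distToSet z A := by
  unfold distToSet
  split_ifs with hAe
  · exact diam_pos nontrivial_univ isCompact_univ.isBounded
  · exact (hA.notMem_iff_infDist_pos (nonempty_iff_ne_empty.2 hAe)).1 hz

lemma exists_pos_forall_le_distToSet {A C : Set X} (hA : IsClosed A) (hC : IsCompact C)
    (hCA : ∀ z ∈ C, z ∉ A) : ∃ R > 0, ∀ z ∈ C, R ≤ distToSet z A :=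
  hC.exists_forall_le' (continuous_distToSet A).continuousOn fun z hz => distToSet_pos hA (hCA z hz)

end Metric

namespace IsFlowMap

variable [MetricSpace X] [CompactSpace X] {φ : ℝ → X → X}

lemma exists_uniform_dist_apply_le (hφ : IsFlowMap φ) {K : Set ℝ} (hK : IsCompact K) {η : ℝ}
    (hη : 0 < η) : ∃ ζ > 0, ∀ s ∈ K, ∀ s' ∈ K, ∀ z z' : X, |s - s'| ≤ ζ → dist z z' ≤ ζ →
      dist (φ s z) (φ s' z') ≤ η := by
  obtain ⟨ζ, hζ, hunif⟩ := uniformContinuousOn_iff_le.1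
    ((hK.prod isCompact_univ).uniformContinuousOn_of_continuous hφ.1.continuousOn) η hη
  refine ⟨ζ, hζ, fun s hs s' hs' z z' hss' hzz' => hunif (s, z) ⟨hs, trivial⟩ (s', z')
    ⟨hs', trivial⟩ ?_⟩
  rw [Prod.dist_eq, Real.dist_eq]
  exact max_le hss' hzz'

lemma exists_forall_dist_le_mul_distToSet (hφ : IsFlowMap φ) {x₀ : X} (hx₀ : x₀ ∉ SingSet φ)
    (T : ℝ) {δ : ℝ} (hδ : 0 < δ) :
    ∃ ζ > 0, ∀ p q : X, ∀ a b : ℝ, dist p x₀ ≤ ζ → dist p q ≤ ζ → a ∈ Icc 0 T → b ∈ Icc 0 T →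
      |a - b| ≤ ζ → ∀ r ∈ Icc (0 : ℝ) 1,
        dist (φ (a * r) p) (φ (b * r) q) ≤ δ * distToSet (φ (a * r) p) (SingSet φ) := by
  have := nontrivial_of_notMem_singSet hx₀
  obtain ⟨R, hR, hRle⟩ := exists_pos_forall_le_distToSet hφ.isClosed_singSet
    (isCompact_Icc.image (hφ.continuous_orbitMap x₀)) (C := (φ · x₀) '' Icc 0 T)
    (by rintro _ ⟨u, -, rfl⟩; exact mt hφ.mem_singSet_of_apply_mem hx₀)
  obtain ⟨ζ, hζ, hunif⟩ := hφ.exists_uniform_dist_apply_le (isCompact_Icc (a := 0) (b := T))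
    (η := min (δ * (R / 2)) (R / 2)) (by positivity)
  refine ⟨ζ, hζ, fun p q a b hpx hpq ha hb hab r hr => ?_⟩
  have hmem {c : ℝ} (hc : c ∈ Icc 0 T) : c * r ∈ Icc 0 T :=
    ⟨mul_nonneg hc.1 hr.1, (mul_le_of_le_one_right hc.1 hr.2).trans hc.2⟩
  have har := hmem ha
  have hdiff : |a * r - b * r| ≤ ζ := by
    rw [← sub_mul, abs_mul, abs_of_nonneg hr.1]
    exact (mul_le_of_le_one_right (abs_nonneg _) hr.2).trans hab
  have hnear : dist (φ (a * r) p) (φ (a * r) x₀) ≤ R / 2 :=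
    (hunif _ har _ har _ _ (by simpa using hζ.le) hpx).trans (min_le_right _ _)
  have hfar : R / 2 ≤ distToSet (φ (a * r) p) (SingSet φ) := by
    have h₁ := distToSet_le_distToSet_add_dist (φ (a * r) x₀) (φ (a * r) p) (SingSet φ)
    have h₂ := hRle _ ⟨a * r, har, rfl⟩
    rw [dist_comm] at h₁
    linarith
  calc dist (φ (a * r) p) (φ (b * r) q) ≤ min (δ * (R / 2)) (R / 2) :=
        hunif _ har _ (hmem hb) _ _ hdiff hpq
    _ ≤ δ * (R / 2) := min_le_left _ _
    _ ≤ δ * distToSet (φ (a * r) p) (SingSet φ) := mul_le_mul_of_nonneg_left hfar hδ.le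

end IsFlowMap

lemma SingularExpansiveOn.exists_flowOrbit_eq_of_periodic [MetricSpace X] {φ : ℝ → X → X}
    (h : SingularExpansiveOn φ univ) (hφ : IsFlowMap φ) :
    ∃ δ > 0, ∀ p q : X, ∀ a b : ℝ, 0 < a → 0 < b → φ a p = p → φ b q = q →
      (∀ r ∈ Ico (0 : ℝ) 1,
        dist (φ (a * r) p) (φ (b * r) q) ≤ δ * distToSet (φ (a * r) p) (SingSet φ)) →
      flowOrbit φ q = flowOrbit φ p := by
  obtain ⟨δ, hδ, hexp⟩ := h 1 one_pos
  refine ⟨δ, hδ, fun p q a b ha hb hp hq hclose => ?_⟩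
  have hshadow (u : ℝ) :
      dist (φ u p) (φ (b / a * u) q) ≤ δ * distToSet (φ u p) (SingSet φ) := by
    obtain ⟨v, rfl⟩ : ∃ v, u = a * v := ⟨u / a, by field_simp⟩
    rw [show b / a * (a * v) = b * v by field_simp, hφ.apply_mul_fract hp,
      hφ.apply_mul_fract hq]
    exact hclose _ ⟨Int.fract_nonneg v, Int.fract_lt_one v⟩
  obtain ⟨t₀, τ, -, heq⟩ :=
    hexp p trivial q trivial _ (increasingHomeo_const_mul (div_pos hb ha)) hshadow
  exact hφ.flowOrbit_eq_of_apply_eq heq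

theorem singular_expansive_dyn_isolated_finitely_many_periodic_orbits
    [MetricSpace X] [CompactSpace X] (φ : ℝ → X → X) (hφ : IsFlowMap φ)
    (h : SingularExpansiveOn φ Set.univ) (hiso : DynIsolated φ (SingSet φ)) :
    ∀ t : ℝ, 0 < t →
      Set.Finite {O : Set X | ∃ x : X, IsPeriodicPoint φ x ∧
        sInf {τ : ℝ | 0 < τ ∧ φ τ x = x} ≤ t ∧ O = flowOrbit φ x} := by
  intro t ht
  by_contra hfin
  obtain ⟨U, hSU, hU⟩ := hiso
  let e := Set.Infinite.natEmbedding _ hfin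
  have hrep (n : ℕ) : ∃ p a, (e n : Set X) = flowOrbit φ p ∧ p ∉ U ∧ 0 < a ∧ a ≤ t ∧ φ a p = p := by
    obtain ⟨x, hx, hxt, hxO⟩ := (e n).2
    obtain ⟨p, a, hpx, hp⟩ := hφ.exists_periodic_rep_notMem (hU ▸ hx.1) ht hx.2 hxt
    exact ⟨p, a, hxO.trans hpx.symm, hp⟩
  choose p a hpO hpU ha hat hap using hrep
  obtain ⟨⟨x₀, τ⟩, -, g, hg, hlim⟩ := (isCompact_univ.prod isCompact_Icc).tendsto_subseq
    (x := fun n => (p n, a n)) fun n => ⟨trivial, (ha n).le, hat n⟩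
  have hx₀ : x₀ ∉ SingSet φ := fun hx => isOpen_interior.isClosed_compl.mem_of_tendsto
    ((continuous_fst.tendsto _).comp hlim) (.of_forall fun k hk => hpU (g k) (interior_subset hk))
    (hSU hx)
  obtain ⟨δ, hδ, hsame⟩ := h.exists_flowOrbit_eq_of_periodic hφ
  obtain ⟨ζ, hζ, hshadow⟩ := hφ.exists_forall_dist_le_mul_distToSet hx₀ t hδ
  obtain ⟨N, hN⟩ := eventually_atTop.1 (tendsto_nhds.1 hlim (ζ / 2) (half_pos hζ))
  have hclose (k : ℕ) (hk : N ≤ k) : dist (p (g k)) x₀ < ζ / 2 ∧ |a (g k) - τ| < ζ / 2 := by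
    simpa only [Function.comp_apply, Prod.dist_eq, max_lt_iff, Real.dist_eq] using hN k hk
  obtain ⟨hpn, han⟩ := hclose N le_rfl
  obtain ⟨hpm, ham⟩ := hclose (N + 1) N.le_succ
  have hpq : dist (p (g N)) (p (g (N + 1))) ≤ ζ := by
    linarith [dist_triangle_right (p (g N)) (p (g (N + 1))) x₀]
  have hab : |a (g N) - a (g (N + 1))| ≤ ζ := by
    linarith [abs_sub_le (a (g N)) τ (a (g (N + 1))), abs_sub_comm τ (a (g (N + 1)))]
  have horb := hsame _ _ _ _ (ha _) (ha _) (hap _) (hap _) fun r hr =>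
    hshadow _ _ _ _ (by linarith) hpq ⟨(ha _).le, hat _⟩ ⟨(ha _).le, hat _⟩ hab r
      (Ico_subset_Icc_self hr)
  exact (hg N.lt_succ_self).ne (e.injective (Subtype.ext ((hpO _).trans
    (horb.symm.trans (hpO _).symm))))
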